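/- arXiv:2005.11547 — 3 statements merged into one kernel-verified Lean document; each statement's English description precedes it below -/
import Mathlib

section
/- Let (I,V) be a uniformly random dart as above and let x, y ∈ [0,M]^d. Conditioned on the dart hitting x or hitting y (i.e., V ≤ max(x_I, y_I)), the probability that it hits both x and y (i.e., V ≤ min(x_I, y_I)) equals the weighted Jaccard similarity J(x,y). -/
open MeasureTheory ProbabilityTheory
open scoped ENNReal

lemma dart_measure_apply (d : ℕ) (hd : 0 < d) (M : ℝ) (hM : 0 < M)
    (f : Fin d → ℝ) (hf : ∀ i, 0 ≤ f i ∧ f i ≤ M) :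
    ((uniformOn (Set.univ : Set (Fin d))).prod
        ((ENNReal.ofReal M)⁻¹ • volume.restrict (Set.Icc (0 : ℝ) M)))
      {p : Fin d × ℝ | p.2 ≤ f p.1} =
      ((d : ℝ≥0∞)⁻¹ * (ENNReal.ofReal M)⁻¹) * ENNReal.ofReal (∑ i, f i) := by
  have huniv : uniformOn (Set.univ : Set (Fin d)) = (d : ℝ≥0∞)⁻¹ • Measure.count := by
    rw [uniformOn, ProbabilityTheory.cond, Measure.restrict_univ, Measure.count_univ]
    simp
  have hmeas : MeasurableSet {p : Fin d × ℝ | p.2 ≤ f p.1} := by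
    apply measurableSet_le measurable_snd
    exact (measurable_of_countable f).comp measurable_fst
  rw [Measure.prod_apply hmeas]
  have hslice : ∀ i : Fin d,
      ((ENNReal.ofReal M)⁻¹ • volume.restrict (Set.Icc (0 : ℝ) M))
        (Prod.mk i ⁻¹' {p : Fin d × ℝ | p.2 ≤ f p.1}) =
      (ENNReal.ofReal M)⁻¹ * ENNReal.ofReal (f i) := by
    intro i
    have h1 : (Prod.mk i ⁻¹' {p : Fin d × ℝ | p.2 ≤ f p.1}) = Set.Iic (f i) := rfl
    rw [h1, Measure.smul_apply, Measure.restrict_apply measurableSet_Iic]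
    have h2 : Set.Iic (f i) ∩ Set.Icc (0 : ℝ) M = Set.Icc 0 (f i) := by
      ext v
      simp only [Set.mem_inter_iff, Set.mem_Iic, Set.mem_Icc]
      constructor
      · rintro ⟨h1, h2, h3⟩; exact ⟨h2, h1⟩
      · rintro ⟨h1, h2⟩; exact ⟨h2, h1, h2.trans (hf i).2⟩
    rw [h2, Real.volume_Icc, smul_eq_mul, sub_zero]
  simp only [hslice]
  rw [huniv, lintegral_smul_measure, MeasureTheory.lintegral_count, tsum_fintype,
    ENNReal.ofReal_sum_of_nonneg (fun i _ => (hf i).1),]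
  simp only [smul_eq_mul, ← mul_assoc, ← Finset.mul_sum]

/-- Conditioned on a uniformly random dart hitting `x` or `y`, it hits both with
probability equal to the weighted Jaccard similarity `J(x,y)`. -/
theorem dart_conditional_jaccard (d : ℕ) (hd : 0 < d) (M : ℝ) (hM : 0 < M)
    (x y : Fin d → ℝ) (hx : ∀ i, 0 ≤ x i ∧ x i ≤ M) (hy : ∀ i, 0 ≤ y i ∧ y i ≤ M)
    (hmax : 0 < ∑ i, max (x i) (y i)) :
    (ProbabilityTheory.cond ((uniformOn (Set.univ : Set (Fin d))).prod
          ((ENNReal.ofReal M)⁻¹ • volume.restrict (Set.Icc (0 : ℝ) M)))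
        {p : Fin d × ℝ | p.2 ≤ max (x p.1) (y p.1)})
      {p : Fin d × ℝ | p.2 ≤ min (x p.1) (y p.1)} =
      ENNReal.ofReal ((∑ i, min (x i) (y i)) / (∑ i, max (x i) (y i))) := by
  have hA : MeasurableSet {p : Fin d × ℝ | p.2 ≤ max (x p.1) (y p.1)} := by
    apply measurableSet_le measurable_snd
    exact (measurable_of_countable (fun i => max (x i) (y i))).comp measurable_fst
  have hsub : {p : Fin d × ℝ | p.2 ≤ max (x p.1) (y p.1)} ∩
      {p : Fin d × ℝ | p.2 ≤ min (x p.1) (y p.1)} =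
      {p : Fin d × ℝ | p.2 ≤ min (x p.1) (y p.1)} := by
    ext p
    simp only [Set.mem_inter_iff, Set.mem_setOf_eq, and_iff_right_iff_imp]
    exact fun h => h.trans min_le_max
  rw [cond_apply hA, hsub]
  have hmaxb : ∀ i, 0 ≤ max (x i) (y i) ∧ max (x i) (y i) ≤ M :=
    fun i => ⟨le_max_of_le_left (hx i).1, max_le (hx i).2 (hy i).2⟩
  have hminb : ∀ i, 0 ≤ min (x i) (y i) ∧ min (x i) (y i) ≤ M :=
    fun i => ⟨le_min (hx i).1 (hy i).1, (min_le_left _ _).trans (hx i).2⟩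
  rw [dart_measure_apply d hd M hM _ hmaxb, dart_measure_apply d hd M hM _ hminb]
  set c : ℝ≥0∞ := (d : ℝ≥0∞)⁻¹ * (ENNReal.ofReal M)⁻¹ with hc
  have hc0 : c ≠ 0 := by
    apply mul_ne_zero
    · simp [ENNReal.inv_ne_zero]
    · simp [ENNReal.inv_ne_zero]
  have hct : c ≠ ⊤ := by
    apply ENNReal.mul_ne_top
    · simp [hd.ne']
    · simp [(ENNReal.ofReal_pos.mpr hM).ne']
  have hSmax0 : ENNReal.ofReal (∑ i, max (x i) (y i)) ≠ 0 :=
    (ENNReal.ofReal_pos.mpr hmax).ne'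
  rw [ENNReal.mul_inv (Or.inl hc0) (Or.inl hct), mul_mul_mul_comm,
    ENNReal.inv_mul_cancel hc0 hct, one_mul, ← ENNReal.div_eq_inv_mul,
    ENNReal.ofReal_div_of_pos hmax]
end

section
/- With the same i.i.d. dart sequence, for any K ≥ 1 the probability that the first K darts hitting x ∪ y (i.e., hitting the pointwise maximum of x and y) all land in the pointwise minimum of x and y equals J(x,y)^K. -/
open MeasureTheory ProbabilityTheory
open scoped ENNReal

noncomputable section AuxFirstK

lemma dart_prod_hit_prob (d : ℕ) (M : ℝ) (hM : 0 < M)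
    (w : Fin d → ℝ) (hw : ∀ i, 0 ≤ w i ∧ w i ≤ M) :
    ((uniformOn (Set.univ : Set (Fin d))).prod
        ((ENNReal.ofReal M)⁻¹ • volume.restrict (Set.Icc (0 : ℝ) M)))
      {z : Fin d × ℝ | z.2 ≤ w z.1} =
      ENNReal.ofReal (∑ i, w i) / ((d : ℝ≥0∞) * ENNReal.ofReal M) := by
  have hB : MeasurableSet {z : Fin d × ℝ | z.2 ≤ w z.1} :=
    measurableSet_le measurable_snd ((measurable_of_countable w).comp measurable_fst)
  rw [Measure.prod_apply hB]
  have hslice : ∀ i : Fin d,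
      ((ENNReal.ofReal M)⁻¹ • volume.restrict (Set.Icc (0 : ℝ) M))
        (Prod.mk i ⁻¹' {z : Fin d × ℝ | z.2 ≤ w z.1}) =
      (ENNReal.ofReal M)⁻¹ * ENNReal.ofReal (w i) := by
    intro i
    have h1 : Prod.mk i ⁻¹' {z : Fin d × ℝ | z.2 ≤ w z.1} = Set.Iic (w i) := rfl
    rw [h1, Measure.smul_apply, smul_eq_mul,
      Measure.restrict_apply measurableSet_Iic]
    have h2 : Set.Iic (w i) ∩ Set.Icc (0:ℝ) M = Set.Icc 0 (w i) := by
      ext v; simp only [Set.mem_inter_iff, Set.mem_Iic, Set.mem_Icc]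
      constructor
      · rintro ⟨ha, hb, hc⟩; exact ⟨hb, ha⟩
      · rintro ⟨ha, hb⟩; exact ⟨hb, ha, hb.trans ((hw i).2)⟩
    rw [h2, Real.volume_Icc, sub_zero]
  rw [lintegral_congr hslice, lintegral_fintype]
  have huni : ∀ i : Fin d, uniformOn (Set.univ : Set (Fin d)) {i} = ((d : ℝ≥0∞))⁻¹ := by
    intro i
    rw [uniformOn_univ, Measure.count_singleton, Fintype.card_fin]
    simp [ENNReal.div_eq_inv_mul]
  simp_rw [huni]
  rw [← Finset.sum_mul, ← Finset.mul_sum, ENNReal.div_eq_inv_mul,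
    ENNReal.mul_inv (by simp) (by simp),
    ← ENNReal.ofReal_sum_of_nonneg (fun i _ => (hw i).1)]
  ring

lemma tsum_pi_prod (K : ℕ) (f : ℕ → ℝ≥0∞) :
    ∑' g : Fin K → ℕ, ∏ j, f (g j) = (∑' t, f t) ^ K := by
  induction K with
  | zero =>
    rw [tsum_eq_single (fun i : Fin 0 => i.elim0)]
    · simp
    · intro b hb; exact absurd (Subsingleton.elim b _) hb
  | succ K ih =>
    rw [← ((Fin.consEquiv (fun _ : Fin (K+1) => ℕ)).tsum_eq fun g : Fin (K+1) → ℕ => ∏ j, f (g j))]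
    have hstep : ∀ p : ℕ × (Fin K → ℕ),
        (∏ j, f (((Fin.consEquiv (fun _ : Fin (K+1) => ℕ)) p) j)) = f p.1 * ∏ j, f (p.2 j) := by
      rintro ⟨a, g⟩
      rw [Fin.prod_univ_succ]
      simp [Fin.consEquiv, Fin.cons]
    rw [tsum_congr hstep, ENNReal.tsum_prod']
    simp_rw [ENNReal.tsum_mul_left, ENNReal.tsum_mul_right]
    rw [ih, pow_succ]
    ring

def posFn (G : ℕ → ℕ) : ℕ → ℕ := fun j => j + ∑ i ∈ Finset.range (j+1), G i

lemma posFn_zero (G : ℕ → ℕ) : posFn G 0 = G 0 := by simp [posFn]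

lemma posFn_succ (G : ℕ → ℕ) (j : ℕ) : posFn G (j+1) = posFn G j + 1 + G (j+1) := by
  simp [posFn, Finset.sum_range_succ]; omega

lemma posFn_strictMono (G : ℕ → ℕ) : StrictMono (posFn G) := by
  apply strictMono_nat_of_lt_succ
  intro n
  rw [posFn_succ]; omega

lemma posFn_congr {G G' : ℕ → ℕ} {j : ℕ} (h : ∀ i, i ≤ j → G i = G' i) :
    posFn G j = posFn G' j := by
  unfold posFn
  congr 1
  exact Finset.sum_congr rfl fun i hi => h i (by simpa [Nat.lt_succ_iff] using hi)

lemma nth_of_pattern (p : ℕ → Prop) (G : ℕ → ℕ) (K : ℕ)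
    (hhit : ∀ j, j < K → p (posFn G j))
    (hmiss : ∀ m, m ≤ posFn G (K-1) → (∀ j, j < K → posFn G j ≠ m) → ¬ p m) :
    ∀ j, j < K → Nat.nth p j = posFn G j := by
  classical
  intro j hj
  have hcount : Nat.count p (posFn G j) = j := by
    rw [Nat.count_eq_card_filter_range]
    have heq : (Finset.range (posFn G j)).filter p = (Finset.range j).image (posFn G) := by
      ext m
      simp only [Finset.mem_filter, Finset.mem_range, Finset.mem_image]
      constructor
      · rintro ⟨hm, hpm⟩
        have hmle : m ≤ posFn G (K-1) :=
          le_trans (le_of_lt hm) ((posFn_strictMono G).monotone (by omega))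
        by_contra hcon
        push_neg at hcon
        refine hmiss m hmle ?_ hpm
        intro i hi hne
        have hij : i < j := (posFn_strictMono G).lt_iff_lt.mp (hne ▸ hm)
        exact hcon i hij hne
      · rintro ⟨i, hi, rfl⟩
        exact ⟨posFn_strictMono G hi, hhit i (lt_trans hi hj)⟩
    rw [heq, Finset.card_image_of_injective _ (posFn_strictMono G).injective, Finset.card_range]
  have h := Nat.nth_count (p := p) (hhit j hj)
  rw [hcount] at h
  exact h

noncomputable def gapsOf (p : ℕ → Prop) : ℕ → ℕ
  | 0 => Nat.nth p 0
  | (i+1) => Nat.nth p (i+1) - Nat.nth p i - 1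

lemma exists_gaps (p : ℕ → Prop) (hp : (setOf p).Infinite) :
    ∃ G : ℕ → ℕ, ∀ j, posFn G j = Nat.nth p j := by
  refine ⟨gapsOf p, ?_⟩
  intro j
  induction j with
  | zero => rw [posFn_zero]; rfl
  | succ j ih =>
    rw [posFn_succ, ih]
    have h := (Nat.nth_lt_nth hp).mpr (by omega : j < j + 1)
    show _ + 1 + (Nat.nth p (j+1) - Nat.nth p j - 1) = _
    omega

lemma gaps_unique {G G' : ℕ → ℕ} {K : ℕ} (h : ∀ j, j < K → posFn G j = posFn G' j) :
    ∀ i, i < K → G i = G' i := by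
  intro i hi
  cases i with
  | zero =>
    have h0 := h 0 hi
    rwa [posFn_zero, posFn_zero] at h0
  | succ i =>
    have h1 := h i (by omega)
    have h2 := h (i+1) hi
    rw [posFn_succ, posFn_succ, h1] at h2
    omega

end AuxFirstK

/-- For an i.i.d. sequence of uniform darts, the probability that the first `K` darts
hitting `max(x,y)` all hit `min(x,y)` equals `J(x,y)^K`. -/
theorem first_K_darts_collision
    {Ω : Type*} [MeasurableSpace Ω] (μ : Measure Ω) [IsProbabilityMeasure μ]
    (d : ℕ) (hd : 0 < d) (M : ℝ) (hM : 0 < M)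
    (D : ℕ → Ω → Fin d × ℝ) (hmeas : ∀ n, Measurable (D n))
    (hindep : iIndepFun D μ)
    (hdist : ∀ n, μ.map (D n) =
      (uniformOn (Set.univ : Set (Fin d))).prod
        ((ENNReal.ofReal M)⁻¹ • volume.restrict (Set.Icc (0 : ℝ) M)))
    (x y : Fin d → ℝ) (hx : ∀ i, 0 ≤ x i ∧ x i ≤ M) (hy : ∀ i, 0 ≤ y i ∧ y i ≤ M)
    (hmax : 0 < ∑ i, max (x i) (y i)) (K : ℕ) (hK : 1 ≤ K) :
    μ {ω | ∀ j < K,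
        (D (Nat.nth (fun n => (D n ω).2 ≤ max (x (D n ω).1) (y (D n ω).1)) j) ω).2 ≤
          min (x (D (Nat.nth (fun n => (D n ω).2 ≤ max (x (D n ω).1) (y (D n ω).1)) j) ω).1)
              (y (D (Nat.nth (fun n => (D n ω).2 ≤ max (x (D n ω).1) (y (D n ω).1)) j) ω).1)} =
      ENNReal.ofReal (((∑ i, min (x i) (y i)) / (∑ i, max (x i) (y i))) ^ K) := by
  classical
  haveI : Nonempty (Fin d) := ⟨⟨0, hd⟩⟩
  -- basic sets
  set Sset : Set (Fin d × ℝ) := {z | z.2 ≤ max (x z.1) (y z.1)} with hSset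
  set Tset : Set (Fin d × ℝ) := {z | z.2 ≤ min (x z.1) (y z.1)} with hTset
  have hTS : Tset ⊆ Sset := by
    intro z hz
    simp only [hTset, hSset, Set.mem_setOf_eq] at *
    exact le_trans hz min_le_max
  have hSm : MeasurableSet Sset := by
    apply measurableSet_le measurable_snd
    exact (measurable_of_countable fun i => x i ⊔ y i).comp measurable_fst
  have hTm : MeasurableSet Tset := by
    apply measurableSet_le measurable_snd
    exact (measurable_of_countable fun i => x i ⊓ y i).comp measurable_fst
  set ν : Measure ℝ := (ENNReal.ofReal M)⁻¹ • volume.restrict (Set.Icc (0:ℝ) M) with hν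
  set π : Measure (Fin d × ℝ) := (uniformOn (Set.univ : Set (Fin d))).prod ν with hπ
  haveI hνprob : IsProbabilityMeasure ν := by
    constructor
    rw [hν, Measure.smul_apply, smul_eq_mul, Measure.restrict_apply MeasurableSet.univ,
      Set.univ_inter, Real.volume_Icc, sub_zero]
    exact ENNReal.inv_mul_cancel (by simp [hM]) ENNReal.ofReal_ne_top
  haveI huprob : IsProbabilityMeasure (uniformOn (Set.univ : Set (Fin d))) :=
    uniformOn_isProbabilityMeasure Set.finite_univ Set.univ_nonempty
  haveI hπprob : IsProbabilityMeasure π := by rw [hπ]; infer_instance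
  set a : ℝ≥0∞ := π Sset with haa
  set b : ℝ≥0∞ := π Tset with hbb
  set rr : ℝ≥0∞ := π Ssetᶜ with hrrdef
  set SM : ℝ := ∑ i, max (x i) (y i) with hSM
  set Sm : ℝ := ∑ i, min (x i) (y i) with hSmdef
  set c : ℝ≥0∞ := (d : ℝ≥0∞) * ENNReal.ofReal M with hc
  have ha : a = ENNReal.ofReal SM / c :=
    dart_prod_hit_prob d M hM (fun i => max (x i) (y i))
      (fun i => ⟨le_trans (hx i).1 (le_max_left _ _), max_le (hx i).2 (hy i).2⟩)
  have hb : b = ENNReal.ofReal Sm / c :=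
    dart_prod_hit_prob d M hM (fun i => min (x i) (y i))
      (fun i => ⟨le_min (hx i).1 (hy i).1, le_trans (min_le_left _ _) (hx i).2⟩)
  have hc0 : c ≠ 0 :=
    mul_ne_zero (Nat.cast_ne_zero.mpr hd.ne') (ENNReal.ofReal_pos.mpr hM).ne'
  have hctop : c ≠ ⊤ := ENNReal.mul_ne_top (ENNReal.natCast_ne_top d) ENNReal.ofReal_ne_top
  have hSMpos : (0:ℝ) < SM := hmax
  have ha0 : a ≠ 0 := by
    rw [ha]
    simp only [ne_eq, ENNReal.div_eq_zero_iff, not_or]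
    exact ⟨by simp [ENNReal.ofReal_eq_zero, not_le, hSMpos], hctop⟩
  have ha1 : a ≤ 1 := prob_le_one
  have hrr : rr = 1 - a := prob_compl_eq_one_sub hSm
  -- event probability for single darts
  have hone : ∀ (n : ℕ) (B : Set (Fin d × ℝ)), MeasurableSet B → μ (D n ⁻¹' B) = π B := by
    intro n B hB
    rw [← Measure.map_apply (hmeas n) hB, hdist n]
  -- the event
  set E : Set Ω := {ω | ∀ j, j < K → D (Nat.nth (fun n => D n ω ∈ Sset) j) ω ∈ Tset} with hE
  show μ E = ENNReal.ofReal ((Sm / SM) ^ K)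
  -- gap extension
  set G : (Fin K → ℕ) → ℕ → ℕ := fun g i => if h : i < K then g ⟨i, h⟩ else 0 with hGdef
  set L : (Fin K → ℕ) → ℕ := fun g => posFn (G g) (K-1) with hLdef
  set P : (Fin K → ℕ) → Finset ℕ := fun g => (Finset.range K).image (posFn (G g)) with hPdef
  set Bs : (Fin K → ℕ) → ℕ → Set (Fin d × ℝ) :=
    fun g m => if m ∈ P g then Tset else Ssetᶜ with hBsdef
  set A : (Fin K → ℕ) → Set Ω :=
    fun g => ⋂ m ∈ Finset.range (L g + 1), D m ⁻¹' Bs g m with hAdef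
  have hPmem : ∀ g m, m ∈ P g ↔ ∃ j, j < K ∧ posFn (G g) j = m := by
    intro g m; simp [hPdef]
  have hposle : ∀ (g : Fin K → ℕ) (j : ℕ), j < K → posFn (G g) j ≤ L g := by
    intro g j hj
    exact (posFn_strictMono (G g)).monotone (by omega)
  have hBsm : ∀ g m, MeasurableSet (Bs g m) := by
    intro g m
    simp only [hBsdef]
    split_ifs
    · exact hTm
    · exact hSm.compl
  have hmemA : ∀ g ω, ω ∈ A g ↔ ∀ m, m ≤ L g → D m ω ∈ Bs g m := by
    intro g ω
    simp [hAdef, Set.mem_iInter, Nat.lt_succ_iff]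
  -- nth values on A g
  have hnthA : ∀ g ω, ω ∈ A g → ∀ j, j < K →
      Nat.nth (fun n => D n ω ∈ Sset) j = posFn (G g) j := by
    intro g ω hω
    apply nth_of_pattern
    · intro j hj
      have h1 : D (posFn (G g) j) ω ∈ Bs g (posFn (G g) j) :=
        (hmemA g ω).mp hω _ (hposle g j hj)
      rw [hBsdef] at h1
      simp only [if_pos ((hPmem g _).mpr ⟨j, hj, rfl⟩)] at h1
      exact hTS h1
    · intro m hm hnot
      have h1 : D m ω ∈ Bs g m := (hmemA g ω).mp hω _ hm
      rw [hBsdef] at h1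
      have : m ∉ P g := by
        rw [hPmem]
        rintro ⟨j, hj, hje⟩
        exact hnot j hj hje
      simp only [if_neg this] at h1
      exact h1
  -- A g ⊆ E
  have hAE : ∀ g, A g ⊆ E := by
    intro g ω hω
    intro j hj
    rw [hnthA g ω hω j hj]
    have h1 : D (posFn (G g) j) ω ∈ Bs g (posFn (G g) j) :=
      (hmemA g ω).mp hω _ (hposle g j hj)
    rw [hBsdef] at h1
    simpa only [if_pos ((hPmem g _).mpr ⟨j, hj, rfl⟩)] using h1
  -- disjointness
  have hdisj : Pairwise (Function.onFun Disjoint A) := by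
    intro g g' hne
    rw [Function.onFun, Set.disjoint_left]
    intro ω hg hg'
    apply hne
    have hpos : ∀ j, j < K → posFn (G g) j = posFn (G g') j := by
      intro j hj
      rw [← hnthA g ω hg j hj, hnthA g' ω hg' j hj]
    have hGeq := gaps_unique hpos
    funext j
    have := hGeq j j.2
    simpa [hGdef] using this
  -- measurability
  have hmeasA : ∀ g, MeasurableSet (A g) := by
    intro g
    exact Finset.measurableSet_biInter _ fun m _ => (hmeas m) (hBsm g m)
  -- measure of A g
  have hAmeas : ∀ g, μ (A g) = b ^ K * ∏ j, rr ^ (g j) := by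
    intro g
    have hind := hindep.meas_biInter (S := Finset.range (L g + 1))
      (s := fun m => D m ⁻¹' Bs g m)
      (fun m _ => ⟨Bs g m, hBsm g m, rfl⟩)
    rw [hAdef]
    rw [hind]
    have hval : ∀ m, μ (D m ⁻¹' Bs g m) = if m ∈ P g then b else rr := by
      intro m
      rw [hone m _ (hBsm g m)]
      show π (if m ∈ P g then Tset else Ssetᶜ) = if m ∈ P g then b else rr
      split_ifs <;> rfl
    simp_rw [hval]
    have hPsub : P g ⊆ Finset.range (L g + 1) := by
      intro m hm
      rw [hPmem] at hm
      obtain ⟨j, hj, rfl⟩ := hm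
      rw [Finset.mem_range, Nat.lt_succ_iff]
      exact hposle g j hj
    rw [Finset.prod_ite, Finset.prod_const, Finset.prod_const]
    have h1 : (Finset.range (L g + 1)).filter (fun m => m ∈ P g) = P g := by
      ext m
      simp only [Finset.mem_filter]
      exact ⟨fun h => h.2, fun h => ⟨hPsub h, h⟩⟩
    have hcard1 : (P g).card = K := by
      show ((Finset.range K).image (posFn (G g))).card = K
      rw [Finset.card_image_of_injective _ (posFn_strictMono (G g)).injective,
        Finset.card_range]
    have hsum : ∑ i ∈ Finset.range K, G g i = ∑ j, g j := by
      rw [← Fin.sum_univ_eq_sum_range]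
      apply Finset.sum_congr rfl
      intro j _
      simp [hGdef]
    have hLg : L g = (K - 1) + ∑ j, g j := by
      have hk1 : K - 1 + 1 = K := Nat.succ_pred_eq_of_pos hK
      show posFn (G g) (K-1) = _
      rw [posFn, hk1, hsum]
    have hcard2 : ((Finset.range (L g + 1)).filter (fun m => ¬ m ∈ P g)).card = ∑ j, g j := by
      have htot := Finset.card_filter_add_card_filter_not
        (s := Finset.range (L g + 1)) (p := fun m => m ∈ P g)
      rw [h1, hcard1, Finset.card_range] at htot
      omega
    rw [h1, hcard1, hcard2, Finset.prod_pow_eq_pow_sum]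
  -- null set of finitely many hits
  have hrrlt : rr < 1 := by
    rw [hrr]
    exact ENNReal.sub_lt_self ENNReal.one_ne_top one_ne_zero ha0
  have hmissall : ∀ N0 m : ℕ, μ {ω | ∀ n, N0 ≤ n → D n ω ∉ Sset} ≤ rr ^ m := by
    intro N0 m
    have hsub : {ω | ∀ n, N0 ≤ n → D n ω ∉ Sset} ⊆
        ⋂ i ∈ Finset.Ico N0 (N0+m), D i ⁻¹' Ssetᶜ := by
      intro ω hω
      simp only [Set.mem_iInter]
      intro i hi
      rw [Finset.mem_Ico] at hi
      exact hω i hi.1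
    refine le_trans (measure_mono hsub) ?_
    have hind := hindep.meas_biInter (S := Finset.Ico N0 (N0+m))
      (s := fun i => D i ⁻¹' Ssetᶜ) (fun i _ => ⟨Ssetᶜ, hSm.compl, rfl⟩)
    rw [hind]
    have : ∀ i ∈ Finset.Ico N0 (N0+m), μ (D i ⁻¹' Ssetᶜ) = rr := by
      intro i _
      rw [hone i _ hSm.compl]
    rw [Finset.prod_congr rfl this, Finset.prod_const, Nat.card_Ico]
    simp
  have hN0 : ∀ N0 : ℕ, μ {ω | ∀ n, N0 ≤ n → D n ω ∉ Sset} = 0 := by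
    intro N0
    refine le_antisymm ?_ zero_le
    exact ge_of_tendsto (ENNReal.tendsto_pow_atTop_nhds_zero_of_lt_one hrrlt)
      (Filter.Eventually.of_forall fun m => hmissall N0 m)
  have hNnull : μ {ω | ({n | D n ω ∈ Sset}).Finite} = 0 := by
    have hsub : {ω | ({n | D n ω ∈ Sset}).Finite} ⊆
        ⋃ N0 : ℕ, {ω | ∀ n, N0 ≤ n → D n ω ∉ Sset} := by
      intro ω hω
      obtain ⟨N0, hb⟩ := (hω.bddAbove : BddAbove {n | D n ω ∈ Sset})
      refine Set.mem_iUnion.mpr ⟨N0 + 1, ?_⟩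
      intro n hn hmem
      exact absurd (hb hmem) (by omega)
    refine le_antisymm ?_ zero_le
    refine le_trans (measure_mono hsub) (le_trans (measure_iUnion_le _) ?_)
    simp [hN0]
  -- E is contained in the union up to the null set
  have hEsub : E ⊆ (⋃ g : Fin K → ℕ, A g) ∪ {ω | ({n | D n ω ∈ Sset}).Finite} := by
    intro ω hω
    by_cases hfin : ({n | D n ω ∈ Sset}).Finite
    · exact Or.inr hfin
    · left
      have hinf : ({n | D n ω ∈ Sset}).Infinite := hfin
      obtain ⟨G0, hG0⟩ := exists_gaps (fun n => D n ω ∈ Sset) hinf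
      set g : Fin K → ℕ := fun j => G0 j with hg
      refine Set.mem_iUnion.mpr ⟨g, ?_⟩
      have hGg : ∀ j, j < K → posFn (G g) j = Nat.nth (fun n => D n ω ∈ Sset) j := by
        intro j hj
        rw [← hG0 j]
        apply posFn_congr
        intro i hi
        have hiK : i < K := by omega
        simp [hGdef, hiK, hg]
      rw [hmemA]
      intro m hm
      by_cases hmP : m ∈ P g
      · rw [hPmem] at hmP
        obtain ⟨j, hj, rfl⟩ := hmP
        have hBsval : Bs g (posFn (G g) j) = Tset := if_pos ((hPmem g _).mpr ⟨j, hj, rfl⟩)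
        rw [hBsval, hGg j hj]
        exact hω j hj
      · have hBsval : Bs g m = Ssetᶜ := if_neg hmP
        rw [hBsval]
        intro hpm
        have hpm' : D m ω ∈ Sset := hpm
        set cnt := Nat.count (fun n => D n ω ∈ Sset) m with hcnt
        have hnthc : Nat.nth (fun n => D n ω ∈ Sset) cnt = m := Nat.nth_count hpm'
        by_cases hcK : cnt < K
        · apply hmP
          rw [hPmem]
          exact ⟨cnt, hcK, by rw [hGg cnt hcK, hnthc]⟩
        · have hlt : Nat.nth (fun n => D n ω ∈ Sset) (K-1) <
              Nat.nth (fun n => D n ω ∈ Sset) cnt :=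
            (Nat.nth_lt_nth hinf).mpr (by omega)
          have hLm : m ≤ Nat.nth (fun n => D n ω ∈ Sset) (K-1) := by
            rw [← hGg (K-1) (by omega)]
            exact hm
          omega
  have hUE : (⋃ g : Fin K → ℕ, A g) ⊆ E := Set.iUnion_subset hAE
  have hEμ : μ E = μ (⋃ g : Fin K → ℕ, A g) := by
    refine le_antisymm ?_ (measure_mono hUE)
    calc μ E ≤ μ ((⋃ g : Fin K → ℕ, A g) ∪ {ω | ({n | D n ω ∈ Sset}).Finite}) :=
        measure_mono hEsub
    _ ≤ μ (⋃ g : Fin K → ℕ, A g) + μ {ω | ({n | D n ω ∈ Sset}).Finite} :=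
        measure_union_le _ _
    _ = μ (⋃ g : Fin K → ℕ, A g) := by rw [hNnull, add_zero]
  rw [hEμ, measure_iUnion hdisj hmeasA]
  have hsum2 : ∑' g : Fin K → ℕ, μ (A g) = b ^ K * (∑' t : ℕ, rr ^ t) ^ K := by
    calc ∑' g : Fin K → ℕ, μ (A g) = ∑' g : Fin K → ℕ, b ^ K * ∏ j, rr ^ (g j) := by
          exact tsum_congr hAmeas
    _ = b ^ K * ∑' g : Fin K → ℕ, ∏ j, rr ^ (g j) := ENNReal.tsum_mul_left
    _ = b ^ K * (∑' t : ℕ, rr ^ t) ^ K := by rw [tsum_pi_prod K (fun t => rr ^ t)]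
  rw [hsum2, ENNReal.tsum_geometric]
  have h1rr : 1 - rr = a := by
    rw [hrr, ENNReal.sub_sub_cancel ENNReal.one_ne_top ha1]
  rw [h1rr, ← mul_pow]
  have hba : b * a⁻¹ = ENNReal.ofReal (Sm / SM) := by
    rw [hb, ha, ENNReal.div_eq_inv_mul, ENNReal.div_eq_inv_mul,
      ENNReal.mul_inv (Or.inl (ENNReal.inv_ne_zero.mpr hctop))
        (Or.inl (ENNReal.inv_ne_top.mpr hc0)), inv_inv]
    have hSM0 : ENNReal.ofReal SM ≠ 0 := by
      simp [ENNReal.ofReal_eq_zero, not_le, hSMpos]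
    calc c⁻¹ * ENNReal.ofReal Sm * (c * (ENNReal.ofReal SM)⁻¹)
        = (c⁻¹ * c) * (ENNReal.ofReal Sm * (ENNReal.ofReal SM)⁻¹) := by ring
    _ = ENNReal.ofReal Sm * (ENNReal.ofReal SM)⁻¹ := by
        rw [ENNReal.inv_mul_cancel hc0 hctop, one_mul]
    _ = ENNReal.ofReal (Sm / SM) := by
        rw [← div_eq_mul_inv, ENNReal.ofReal_div_of_pos hSMpos]
  rw [hba, ← ENNReal.ofReal_pow]
  have hSmnonneg : 0 ≤ Sm := Finset.sum_nonneg fun i _ => le_min (hx i).1 (hy i).1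
  exact div_nonneg hSmnonneg hSMpos.le
end

section
/- There is a universal constant C such that for all real t ≥ 1, φ ≥ 1, m ≥ 1 and W > 0: m · log(1 + tW/m) ≤ C · (φ·t + m · log(1 + W/φ)). -/
theorem log_bound_constant :
    ∃ C : ℝ, 0 < C ∧ ∀ t φ m W : ℝ, 1 ≤ t → 1 ≤ φ → 1 ≤ m → 0 < W →
      m * Real.log (1 + t * W / m) ≤ C * (φ * t + m * Real.log (1 + W / φ)) := by
  refine ⟨1, one_pos, fun t φ m W ht hφ hm hW => ?_⟩
  rw [one_mul]
  have hm0 : (0:ℝ) < m := lt_of_lt_of_le one_pos hm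
  have hφ0 : (0:ℝ) < φ := lt_of_lt_of_le one_pos hφ
  have ht0 : (0:ℝ) < t := lt_of_lt_of_le one_pos ht
  have hlog2 : (0:ℝ) ≤ Real.log (1 + W / φ) :=
    Real.log_nonneg (by nlinarith [div_nonneg hW.le hφ0.le])
  rcases le_or_gt m (φ * t) with h | h
  · have h1 : 1 + t * W / m ≤ (φ * t / m) * (1 + W / φ) := by
      rw [div_mul_eq_mul_div, le_div_iff₀ hm0]
      have hW1 : 0 < t * W := mul_pos ht0 hW
      have e1 : t * W / m * m = t * W := div_mul_cancel₀ _ hm0.ne'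
      have e2 : W / φ * φ = W := div_mul_cancel₀ _ hφ0.ne'
      nlinarith
    have h2 : Real.log (1 + t * W / m) ≤ Real.log (φ * t / m) + Real.log (1 + W / φ) := by
      calc Real.log (1 + t * W / m) ≤ Real.log ((φ * t / m) * (1 + W / φ)) :=
            Real.log_le_log (by positivity) h1
        _ = Real.log (φ * t / m) + Real.log (1 + W / φ) :=
            Real.log_mul (by positivity) (by positivity)
    have h3 : Real.log (φ * t / m) ≤ φ * t / m - 1 :=
      Real.log_le_sub_one_of_pos (by positivity)
    have h4 : m * Real.log (φ * t / m) ≤ φ * t - m := by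
      have := mul_le_mul_of_nonneg_left h3 hm0.le
      calc m * Real.log (φ * t / m) ≤ m * (φ * t / m - 1) := this
        _ = φ * t - m := by field_simp
    nlinarith [mul_le_mul_of_nonneg_left h2 hm0.le]
  · have h1 : t * W / m ≤ W / φ := by
      rw [div_le_div_iff₀ hm0 hφ0]; nlinarith
    have h2 : Real.log (1 + t * W / m) ≤ Real.log (1 + W / φ) :=
      Real.log_le_log (by positivity) (by linarith)
    nlinarith [mul_le_mul_of_nonneg_left h2 hm0.le]
end
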